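/- arXiv:1211.5982 — 2 statements merged into one kernel-verified Lean document; each statement's English description precedes it below -/
import Mathlib

section
/- Let g be an isometry of U_1 and suppose that for some 0 ≤ d_0 ≤ 1, g moves every type of distance d_0 almost maximally. Then for every d ≤ d_0, g moves every type of distance d almost maximally or by distance 1 − 2(d_0 − d). -/
/-!
Put `e = d₀ - d`. Over `S ∪ g S`, the type at distance `min 1 (d(a, y) + e)` from each `y ∈ S`,
amalgamated freely with `g S` over `S`, has distance `d₀`; so it has a realisation `b'` with `b'`
and `g b'` independent over `S ∪ g S`. Next realise `tp(a/S)` by a point `b` at distance `e` from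
`b'`, independent from `g⁻¹ b'` over `S ∪ {b'}`. Since `d(b, g⁻¹ b') ≤ d(b, g b) + e`, either
`d(b, g b) ≥ 1 - e`, or a geodesic from `b` to `g⁻¹ b'` passes through `S` or through `b'`; in the
latter cases the independences of `b'` yield `y ∈ S` with `d(b, g b) = d(b, y) + d(y, g b)`.
-/

/-- A metric space is a bounded Urysohn space of diameter 1 if it is complete, separable,
has diameter at most 1, is homogeneous (every isometry between finite subsets extends to a
global surjective isometry), and embeds every finite metric space of diameter at most 1. -/
structure IsUrysohnOne (X : Type) [MetricSpace X] : Prop where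
  complete : CompleteSpace X
  separable : TopologicalSpace.SeparableSpace X
  diam_le_one : ∀ x y : X, dist x y ≤ 1
  homogeneous : ∀ (s : Finset X) (f : X → X),
    (∀ x ∈ s, ∀ y ∈ s, dist (f x) (f y) = dist x y) →
    ∃ g : X ≃ᵢ X, ∀ x ∈ s, g x = f x
  universal : ∀ (Y : Type) [MetricSpace Y] [Finite Y],
    (∀ y z : Y, dist y z ≤ 1) → ∃ f : Y → X, Isometry f

/-- `A` and `C` are independent over `B`. -/
def Indep {X : Type} [MetricSpace X] (A B C : Set X) : Prop :=
  ∀ a ∈ A, ∀ c ∈ C, dist a c < 1 → ∃ b ∈ B, dist a c = dist a b + dist b c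

/-- The distance of the type `tp a / S`. -/
noncomputable def typeDist {X : Type} [MetricSpace X] (a : X) (S : Finset X)
    (hS : S.Nonempty) : ℝ := S.inf' hS (fun b => dist a b)

/-- `x` realises the type of `a` over `S`. -/
def Realises {X : Type} [MetricSpace X] (x a : X) (S : Finset X) : Prop :=
  ∀ b ∈ S, dist x b = dist a b

/-- `g` moves the type of `a` over `S` almost maximally. -/
def MovesAlmostMax {X : Type} [MetricSpace X] (g : X ≃ᵢ X) (a : X) (S : Finset X) : Prop :=
  ∃ x : X, Realises x a S ∧ Indep {x} (↑S) {g x}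

/-- `g` moves the type of `a` over `S` by distance `C`. -/
def MovesBy {X : Type} [MetricSpace X] (g : X ≃ᵢ X) (a : X) (S : Finset X) (C : ℝ) : Prop :=
  ∃ x : X, Realises x a S ∧ C ≤ dist x (g x)

/-- `k` is a conjugate of `g` or of `g⁻¹`. -/
def IsConjOfOrInv {G : Type} [Group G] (g k : G) : Prop :=
  ∃ h : G, k = h * g * h⁻¹ ∨ k = h * g⁻¹ * h⁻¹

section Katetov

variable {Y : Type} [MetricSpace Y]

def katetovDist (f : Y → ℝ) : Option Y → Option Y → ℝ
  | some y, some z => dist y z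
  | some y, none => f y
  | none, some z => f z
  | none, none => 0

abbrev katetovMetricSpace (f : Y → ℝ) (hpos : ∀ y, 0 < f y)
    (hlip : ∀ y z, f y ≤ f z + dist y z) (hsum : ∀ y z, dist y z ≤ f y + f z) :
    MetricSpace (Option Y) where
  dist := katetovDist f
  dist_self := by rintro (_ | y) <;> simp [katetovDist]
  dist_comm := by rintro (_ | y) (_ | z) <;> simp [katetovDist, dist_comm]
  dist_triangle := by
    rintro (_ | x) (_ | y) (_ | z) <;> simp only [katetovDist]
    · norm_num
    · linarith [hpos z]
    · linarith [hpos y]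
    · linarith [hlip z y, dist_comm y z]
    · linarith [hpos x]
    · exact hsum x z
    · linarith [hlip x y, dist_comm x y]
    · exact dist_triangle x y z
  eq_of_dist_eq_zero := by
    rintro (_ | x) (_ | y) h <;> simp only [katetovDist] at h
    · rfl
    · exact absurd h (hpos y).ne'
    · exact absurd h (hpos x).ne'
    · rw [dist_eq_zero.1 h]

end Katetov

section TypeDist

variable {X : Type} [MetricSpace X] (a : X) {S : Finset X} (hS : S.Nonempty)

lemma typeDist_nonneg : 0 ≤ typeDist a S hS :=
  Finset.le_inf' hS _ fun _ _ => dist_nonneg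

lemma typeDist_le_dist {y : X} (hy : y ∈ S) : typeDist a S hS ≤ dist a y :=
  Finset.inf'_le _ hy

end TypeDist

lemma le_min_one_add_min_one {r x y : ℝ} (hr : r ≤ 1) (hx : 0 ≤ x) (hy : 0 ≤ y)
    (h : r ≤ x + y) : r ≤ min 1 x + min 1 y := by
  rcases min_cases 1 x with ⟨hx', -⟩ | ⟨hx', -⟩ <;>
    rcases min_cases 1 y with ⟨hy', -⟩ | ⟨hy', -⟩ <;> rw [hx', hy'] <;> linarith

section FreeAmalgam

variable {X ι : Type} [MetricSpace X] {s : Finset ι} {hs : s.Nonempty} {p : ι → X} {c : ι → ℝ}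

variable (s hs p c) in
/-- The distance from `u` of a new point placed at distance `c i` from each `p i` in the free
amalgam: the length of a shortest path through some `p i`, truncated at `1`. -/
noncomputable def freeAmalgamDist (u : X) : ℝ :=
  min 1 (s.inf' hs fun i => c i + dist (p i) u)

lemma freeAmalgamDist_le_one (u : X) : freeAmalgamDist s hs p c u ≤ 1 :=
  min_le_left _ _

lemma freeAmalgamDist_le_add_dist (u v : X) :
    freeAmalgamDist s hs p c u ≤ freeAmalgamDist s hs p c v + dist u v := by
  obtain ⟨i, hi, hv⟩ := s.exists_mem_eq_inf' hs fun i => c i + dist (p i) v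
  have hinf : s.inf' hs (fun i => c i + dist (p i) u) ≤
      s.inf' hs (fun i => c i + dist (p i) v) + dist u v := by
    rw [hv]
    exact (Finset.inf'_le _ hi).trans (by linarith [dist_triangle_right (p i) u v])
  calc freeAmalgamDist s hs p c u
      ≤ min (1 + dist u v) (s.inf' hs (fun i => c i + dist (p i) v) + dist u v) :=
        min_le_min (le_add_of_nonneg_right dist_nonneg) hinf
    _ = freeAmalgamDist s hs p c v + dist u v := min_add_add_right _ _ _

lemma le_freeAmalgamDist {r : ℝ} (hr : r ≤ 1) (hc : ∀ i ∈ s, r ≤ c i) (u : X) :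
    r ≤ freeAmalgamDist s hs p c u :=
  le_min hr <| Finset.le_inf' hs _ fun i hi => by
    linarith [hc i hi, dist_nonneg (x := p i) (y := u)]

lemma exists_eq_freeAmalgamDist {u : X} (hu : freeAmalgamDist s hs p c u < 1) :
    ∃ i ∈ s, freeAmalgamDist s hs p c u = c i + dist (p i) u := by
  obtain ⟨i, hi, hiu⟩ := s.exists_mem_eq_inf' hs fun i => c i + dist (p i) u
  refine ⟨i, hi, ?_⟩
  unfold freeAmalgamDist at hu ⊢
  rw [min_eq_right ((min_lt_iff.1 hu).resolve_left (lt_irrefl 1)).le, hiu]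

lemma dist_le_freeAmalgamDist_add (hdiam : ∀ x y : X, dist x y ≤ 1)
    (hc : ∀ i ∈ s, ∀ j ∈ s, dist (p i) (p j) ≤ c i + c j) (u v : X) :
    dist u v ≤ freeAmalgamDist s hs p c u + freeAmalgamDist s hs p c v := by
  have hc₀ : ∀ i ∈ s, 0 ≤ c i := fun i hi => by linarith [hc i hi i hi, dist_self (p i)]
  obtain ⟨i, hi, hu⟩ := s.exists_mem_eq_inf' hs fun i => c i + dist (p i) u
  obtain ⟨j, hj, hv⟩ := s.exists_mem_eq_inf' hs fun i => c i + dist (p i) v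
  rw [freeAmalgamDist, freeAmalgamDist, hu, hv]
  refine le_min_one_add_min_one (hdiam u v)
    (by linarith [hc₀ i hi, dist_nonneg (x := p i) (y := u)])
    (by linarith [hc₀ j hj, dist_nonneg (x := p j) (y := v)]) ?_
  linarith [dist_triangle4 u (p i) (p j) v, hc i hi j hj, dist_comm u (p i)]

lemma freeAmalgamDist_apply_le {i : ι} (hi : i ∈ s) : freeAmalgamDist s hs p c (p i) ≤ c i :=
  (min_le_right _ _).trans <| (Finset.inf'_le _ hi).trans_eq <| by rw [dist_self, add_zero]

lemma freeAmalgamDist_apply (hc : ∀ i ∈ s, ∀ j ∈ s, c i ≤ c j + dist (p j) (p i)) {i : ι}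
    (hi : i ∈ s) : freeAmalgamDist s hs p c (p i) = min 1 (c i) :=
  le_antisymm (le_min (freeAmalgamDist_le_one _) (freeAmalgamDist_apply_le hi))
    (min_le_min_left 1 (Finset.le_inf' hs _ fun j hj => hc i hi j hj))

lemma indep_of_dist_eq_freeAmalgamDist {B C : Set X} (hpB : ∀ i ∈ s, p i ∈ B) {x : X}
    (hx : ∀ i ∈ s, dist x (p i) ≤ c i) (hC : ∀ u ∈ C, dist x u = freeAmalgamDist s hs p c u) :
    Indep {x} B C := by
  rintro _ rfl u hu hxu
  obtain ⟨i, hi, hiu⟩ := exists_eq_freeAmalgamDist (hC u hu ▸ hxu)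
  exact ⟨p i, hpB i hi, le_antisymm (dist_triangle _ _ _) (by linarith [hx i hi, hC u hu])⟩

end FreeAmalgam

namespace IsUrysohnOne

variable {X : Type} [MetricSpace X]

theorem exists_dist_eq_of_isometry (hX : IsUrysohnOne X) (T : Finset X) {φ : T → X}
    (hφ : Isometry φ) (p : X) : ∃ x, ∀ y (hy : y ∈ T), dist x y = dist p (φ ⟨y, hy⟩) := by
  classical
  obtain ⟨ψ, hψ⟩ := hX.homogeneous T (fun y => if hy : y ∈ T then φ ⟨y, hy⟩ else y)
    (fun y hy z hz => by simp [hy, hz, hφ.dist_eq, Subtype.dist_eq])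
  refine ⟨ψ.symm p, fun y hy => ?_⟩
  rw [← ψ.dist_eq, ψ.apply_symm_apply, hψ y hy, dif_pos hy]

theorem exists_forall_dist_eq (hX : IsUrysohnOne X) (T : Finset X) (f : X → ℝ)
    (hle : ∀ y ∈ T, f y ≤ 1) (hlip : ∀ y ∈ T, ∀ z ∈ T, f y ≤ f z + dist y z)
    (hsum : ∀ y ∈ T, ∀ z ∈ T, dist y z ≤ f y + f z) :
    ∃ x, ∀ y ∈ T, dist x y = f y := by
  by_cases hzero : ∃ y₀ ∈ T, f y₀ = 0
  · obtain ⟨y₀, hy₀, hfy₀⟩ := hzero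
    exact ⟨y₀, fun y hy => le_antisymm (by linarith [hsum y₀ hy₀ y hy])
      (by linarith [hlip y hy y₀ hy₀, dist_comm y y₀])⟩
  push Not at hzero
  have hpos : ∀ y : T, 0 < f y := fun y =>
    (by linarith [hsum y y.2 y y.2, dist_self y.1] : 0 ≤ f y).lt_of_ne (hzero y y.2).symm
  let _ := katetovMetricSpace (fun y : T => f y) hpos (fun y z => hlip y y.2 z z.2)
    (fun y z => hsum y y.2 z z.2)
  obtain ⟨φ, hφ⟩ := hX.universal (Option T) <| by
    rintro (_ | y) (_ | z)
    exacts [(dist_self (none : Option T)).trans_le zero_le_one, hle z z.2, hle y y.2,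
      hX.diam_le_one y z]
  obtain ⟨x, hx⟩ := hX.exists_dist_eq_of_isometry T
    (hφ.comp (Isometry.of_dist_eq fun _ _ => rfl : Isometry (some : T → Option T))) (φ none)
  exact ⟨x, fun y hy => (hx y hy).trans (hφ.dist_eq _ _)⟩

theorem exists_forall_dist_eq_freeAmalgamDist {ι : Type} (hX : IsUrysohnOne X) (T : Finset X)
    {s : Finset ι} (hs : s.Nonempty) {p : ι → X} {c : ι → ℝ}
    (hc : ∀ i ∈ s, ∀ j ∈ s, dist (p i) (p j) ≤ c i + c j) :
    ∃ x, ∀ u ∈ T, dist x u = freeAmalgamDist s hs p c u :=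
  hX.exists_forall_dist_eq T _ (fun u _ => freeAmalgamDist_le_one u)
    (fun u _ v _ => freeAmalgamDist_le_add_dist u v)
    (fun u _ v _ => dist_le_freeAmalgamDist_add hX.diam_le_one hc u v)

/-- The type of `a` over `S`, pushed away from `S` by `e` and amalgamated freely with `T`. -/
theorem exists_shifted_type [DecidableEq X] (hX : IsUrysohnOne X) (a : X) (S T : Finset X)
    (hS : S.Nonempty) {e : ℝ} (he : 0 ≤ e) :
    ∃ a₁, typeDist a₁ (S ∪ T) (hS.mono Finset.subset_union_left) = min 1 (typeDist a S hS + e) ∧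
      ∀ b, Realises b a₁ (S ∪ T) →
        (∀ y ∈ S, dist b y = min 1 (dist a y + e)) ∧ Indep {b} S T := by
  set c : X → ℝ := fun y => min 1 (dist a y + e)
  have hc_lip : ∀ y z, c y ≤ c z + dist z y := fun y z =>
    (min_le_min (le_add_of_nonneg_right dist_nonneg)
      (by linarith [dist_triangle a z y])).trans_eq (min_add_add_right _ _ _)
  have hc_sum : ∀ y z, dist y z ≤ c y + c z := fun y z =>
    le_min_one_add_min_one (hX.diam_le_one y z) (by positivity) (by positivity)
      (by linarith [dist_triangle_left y z a])
  obtain ⟨a₁, ha₁⟩ := hX.exists_forall_dist_eq_freeAmalgamDist (S ∪ T) hS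
    (p := id) (fun y _ z _ => hc_sum y z)
  have hS_eq : ∀ y ∈ S, freeAmalgamDist S hS id c y = c y := fun y hy =>
    (freeAmalgamDist_apply (p := id) (fun y _ z _ => hc_lip y z) hy).trans
      (by rw [← min_assoc, min_self])
  have hreal : ∀ b, Realises b a₁ (S ∪ T) →
      ∀ u ∈ S ∪ T, dist b u = freeAmalgamDist S hS id c u :=
    fun b hb u hu => (hb u hu).trans (ha₁ u hu)
  refine ⟨a₁, le_antisymm ?_ ?_, fun b hb => ⟨fun y hy => ?_, ?_⟩⟩
  · obtain ⟨y₀, hy₀, had⟩ := S.exists_mem_eq_inf' hS (dist a)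
    refine (Finset.inf'_le _ (Finset.mem_union_left T hy₀)).trans_eq ?_
    rw [ha₁ y₀ (Finset.mem_union_left T hy₀), hS_eq y₀ hy₀, typeDist, had]
  · refine Finset.le_inf' _ _ fun u hu => (ha₁ u hu).symm ▸ le_freeAmalgamDist (min_le_left _ _)
      (fun y hy => min_le_min_left 1 (by linarith [typeDist_le_dist a hS hy])) u
  · rw [hreal b hb y (Finset.mem_union_left T hy), hS_eq y hy]
  · exact indep_of_dist_eq_freeAmalgamDist (fun y hy => hy)
      (fun y hy => (hreal b hb y (Finset.mem_union_left T hy)).trans_le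
        (freeAmalgamDist_apply_le hy))
      (fun u hu => hreal b hb u (Finset.mem_union_right S hu))

theorem exists_realises_dist_le_indep [DecidableEq X] (hX : IsUrysohnOne X) (a b' u : X)
    (S : Finset X) {e : ℝ} (he₀ : 0 ≤ e) (he₁ : e ≤ 1)
    (hb' : ∀ y ∈ S, dist b' y = min 1 (dist a y + e)) :
    ∃ b, Realises b a S ∧ dist b b' ≤ e ∧ Indep {b} ↑(insert b' S) {u} := by
  let p : Option X → X := fun o => o.elim b' id
  let c : Option X → ℝ := fun o => o.elim e (dist a)
  have hs : (Finset.insertNone S).Nonempty := ⟨none, by simp⟩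
  have hb'le : ∀ y ∈ S, dist b' y ≤ dist a y + e := fun y hy =>
    (hb' y hy).trans_le (min_le_right _ _)
  have hc_sum : ∀ i ∈ Finset.insertNone S, ∀ j ∈ Finset.insertNone S,
      dist (p i) (p j) ≤ c i + c j := by
    rintro (_ | y) hy (_ | z) hz <;>
      simp only [p, c, Option.elim, id, Finset.some_mem_insertNone] at hy hz ⊢
    · simp [he₀]
    · linarith [hb'le z hz]
    · linarith [hb'le y hy, dist_comm y b']
    · exact dist_triangle_left y z a
  have hc_lip : ∀ i ∈ Finset.insertNone S, ∀ j ∈ Finset.insertNone S,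
      c i ≤ c j + dist (p j) (p i) := by
    rintro (_ | y) hy (_ | z) hz <;>
      simp only [p, c, Option.elim, id, Finset.some_mem_insertNone] at hy hz ⊢
    · simp
    · rw [dist_comm z b', hb' z hz]
      rcases min_cases 1 (dist a z + e) with ⟨h, -⟩ | ⟨h, -⟩ <;> rw [h] <;>
        linarith [dist_nonneg (x := a) (y := z), dist_comm a z]
    · rw [hb' y hy]
      rcases min_cases 1 (dist a y + e) with ⟨h, -⟩ | ⟨h, -⟩ <;> rw [h] <;>
        linarith [hX.diam_le_one a y]
    · linarith [dist_triangle a z y]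
  obtain ⟨b, hb⟩ := hX.exists_forall_dist_eq_freeAmalgamDist (insert b' (insert u S)) hs hc_sum
  have hpT : ∀ i ∈ Finset.insertNone S, p i ∈ insert b' (insert u S) := by
    rintro (_ | y) hy <;> simp_all [p]
  have hbp : ∀ i ∈ Finset.insertNone S, dist b (p i) ≤ c i := fun i hi =>
    (hb _ (hpT i hi)).trans_le (freeAmalgamDist_apply_le hi)
  refine ⟨b, fun y hy => ?_, hbp none (by simp),
    indep_of_dist_eq_freeAmalgamDist (hs := hs) ?_ hbp ?_⟩
  · exact (hb y (by simp [hy])).trans ((freeAmalgamDist_apply hc_lip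
      (Finset.some_mem_insertNone.2 hy)).trans (min_eq_right (hX.diam_le_one a y)))
  · rintro (_ | y) hy <;> simp_all [p]
  · rintro v rfl
    exact hb v (by simp)

end IsUrysohnOne

lemma eq_of_eq_min_one_of_lt {r x : ℝ} (h : r = min 1 x) (hr : r < 1) : r = x :=
  h.trans (min_eq_right ((min_lt_iff.1 (h ▸ hr)).resolve_left (lt_irrefl 1)).le)

lemma indep_singleton_of_add_le {X : Type} [MetricSpace X] {x y w : X} {B : Set X} (hw : w ∈ B)
    (h : dist x w + dist w y ≤ dist x y) : Indep {x} B {y} := by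
  rintro _ rfl _ rfl -
  exact ⟨w, hw, le_antisymm (dist_triangle _ _ _) h⟩

section Isometry

variable {X : Type} [MetricSpace X] [DecidableEq X] (g : X ≃ᵢ X) {b b' : X} {S : Finset X} {e : ℝ}

lemma exists_dist_add_dist_le (hb'S : ∀ y ∈ S, dist b' y = min 1 (dist b y + e))
    (hb'T : Indep {b'} ↑S ↑(S.image g)) {z : X} (hz : z ∈ S) (hz₁ : dist b' (g z) < 1) :
    ∃ y ∈ S, dist b y + dist y (g b) + e ≤ dist b' (g z) + dist b z := by
  obtain ⟨y, hy, hyz⟩ := hb'T b' rfl (g z) (by simp [hz]) hz₁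
  have hy₁ := eq_of_eq_min_one_of_lt (hb'S y hy) (by linarith [dist_nonneg (x := y) (y := g z)])
  have hgz : dist (g z) (g b) = dist b z := by rw [g.dist_eq, dist_comm]
  exact ⟨y, hy, by linarith [dist_triangle y (g z) (g b)]⟩

theorem indep_or_one_sub_le_dist (he : 0 ≤ e) (hbb' : dist b b' ≤ e)
    (hb'S : ∀ y ∈ S, dist b' y = min 1 (dist b y + e))
    (hb'T : Indep {b'} ↑S ↑(S.image g)) (hb'g : Indep {b'} ↑(S ∪ S.image g) {g b'})
    (hb : Indep {b} ↑(insert b' S) {g.symm b'}) :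
    Indep {b} ↑S {g b} ∨ 1 - e ≤ dist b (g b) := by
  have hsymm : ∀ x, dist x (g.symm b') = dist b' (g x) := fun x => by
    rw [← g.dist_eq, g.apply_symm_apply, dist_comm]
  have hlow : dist b (g.symm b') ≤ dist b (g b) + e := by
    linarith [hsymm b, dist_triangle b' b (g b), dist_comm b b']
  rcases le_or_gt 1 (dist b (g.symm b')) with h₁ | h₁
  · exact Or.inr (by linarith)
  refine Or.inl ?_
  obtain ⟨w, hw, hbw⟩ := hb b rfl _ rfl h₁
  rcases Finset.mem_insert.1 hw with hwb' | hwS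
  · rw [hwb'] at hbw
    have hD : dist b' (g b') < 1 := by linarith [hsymm b', dist_nonneg (x := b) (y := b')]
    obtain ⟨v, hv, hb'v⟩ := hb'g b' rfl (g b') rfl hD
    rcases Finset.mem_union.1 hv with hvS | hvT
    · have hv₁ := eq_of_eq_min_one_of_lt (hb'S v hvS)
        (by linarith [dist_nonneg (x := v) (y := g b')])
      have hgb : dist (g b') (g b) = dist b b' := by rw [g.dist_eq, dist_comm]
      exact indep_singleton_of_add_le hvS (by linarith [dist_triangle v (g b') (g b), hsymm b'])
    · obtain ⟨z, hz, rfl⟩ := Finset.mem_image.1 hvT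
      have hgz : dist (g z) (g b') = dist b' z := by rw [g.dist_eq, dist_comm]
      have hz₁ := eq_of_eq_min_one_of_lt (hb'S z hz)
        (by linarith [dist_nonneg (x := b') (y := g z)])
      obtain ⟨y, hy, hyb⟩ := exists_dist_add_dist_le g hb'S hb'T hz
        (by linarith [dist_nonneg (x := g z) (y := g b')])
      exact indep_singleton_of_add_le hy (by linarith [hsymm b', dist_nonneg (x := b) (y := b')])
  · obtain ⟨y, hy, hyb⟩ := exists_dist_add_dist_le g hb'S hb'T hwS
      (by linarith [hsymm w, dist_nonneg (x := b) (y := w)])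
    exact indep_singleton_of_add_le hy (by linarith [hsymm w])

end Isometry

theorem moves_almost_max_or_by_distance_general (X : Type) [MetricSpace X]
    (hX : IsUrysohnOne X) (g : X ≃ᵢ X) (d₀ : ℝ) (hd₀' : d₀ ≤ 1)
    (hmax : ∀ (a : X) (S : Finset X) (hS : S.Nonempty),
      typeDist a S hS = d₀ → MovesAlmostMax g a S) :
    ∀ d ≤ d₀, ∀ (a : X) (S : Finset X) (hS : S.Nonempty), typeDist a S hS = d →
      MovesAlmostMax g a S ∨ MovesBy g a S (1 - 2 * (d₀ - d)) := by
  classical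
  intro d hd a S hS had
  have he : 0 ≤ d₀ - d := sub_nonneg.2 hd
  obtain ⟨a₁, ha₁d, ha₁⟩ := hX.exists_shifted_type a S (S.image g) hS he
  rw [had, add_sub_cancel, min_eq_right hd₀'] at ha₁d
  obtain ⟨b', hb'a₁, hb'g⟩ := hmax a₁ _ _ ha₁d
  obtain ⟨hb'S, hb'T⟩ := ha₁ b' hb'a₁
  obtain ⟨b, hba, hbb', hb⟩ := hX.exists_realises_dist_le_indep a b' (g.symm b') S he
    (by linarith [had ▸ typeDist_nonneg a hS]) hb'S
  have hb'b : ∀ y ∈ S, dist b' y = min 1 (dist b y + (d₀ - d)) := fun y hy => by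
    rw [hb'S y hy, hba y hy]
  rcases indep_or_one_sub_le_dist g he hbb' hb'b hb'T hb'g hb with h | h
  · exact Or.inl ⟨b, hba, h⟩
  · exact Or.inr ⟨b, hba, by linarith⟩

theorem moves_almost_max_or_by_distance (X : Type) [MetricSpace X]
    (hX : IsUrysohnOne X) (g : X ≃ᵢ X) (d₀ : ℝ) (hd₀ : 0 ≤ d₀) (hd₀' : d₀ ≤ 1)
    (hmax : ∀ (a : X) (S : Finset X) (hS : S.Nonempty),
      typeDist a S hS = d₀ → MovesAlmostMax g a S) :
    ∀ d ≤ d₀, ∀ (a : X) (S : Finset X) (hS : S.Nonempty), typeDist a S hS = d →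
      MovesAlmostMax g a S ∨ MovesBy g a S (1 - 2 * (d₀ - d)) :=
  moves_almost_max_or_by_distance_general X hX g d₀ hd₀' hmax
end

section
/- For every ε > 0 there exists a non-identity isometry g of U_1 whose displacement is bounded by ε, i.e., d(x, g(x)) ≤ ε for all x ∈ U_1. Hence Isom(U_1) is not boundedly simple with uniform bounds independent of the element: there is no N such that every element of Isom(U_1) is a product of at most N conjugates of any given nontrivial g. -/
/-! Back and forth along a dense sequence, using homogeneity and universality of `U_1` to realise
one-point extensions, turns a partial isometry `p ↦ q` with `0 < d(p, q) ≤ ε` into a partial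
isometry of displacement `≤ ε` with dense domain and range; by completeness it extends to an
isometry of `U_1` of displacement `≤ ε`. Displacement bounds are invariant under conjugation and
add up along products, so `N` conjugates of an isometry of displacement `< δ / N` cannot produce
an isometry that moves some point by `δ`. -/

variable {X : Type} [MetricSpace X]

theorem Dense.exists_isometry_extension {α β : Type*} [MetricSpace α] [MetricSpace β]
    [CompleteSpace β] {s : Set α} (hs : Dense s) {f : s → β} (hf : Isometry f) :
    ∃ F : α → β, Isometry F ∧ ∀ x : s, F x = f x := by
  have hF := hs.extend_of_ind hf.uniformContinuous
  have hc := (hs.uniformContinuous_extend hf.uniformContinuous).continuous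
  refine ⟨hs.extend f, Isometry.of_dist_eq ?_, hF⟩
  refine isClosed_property2 hs.denseRange_val
    (p := fun x y => dist (hs.extend f x) (hs.extend f y) = dist x y)
    (isClosed_eq (by fun_prop) (by fun_prop)) fun x y => ?_
  simp only [hF, hf.dist_eq, Subtype.dist_eq]

theorem IsConjOfOrInv.dist_apply_le {g k : X ≃ᵢ X} (hk : IsConjOfOrInv g k) {ε : ℝ}
    (hg : ∀ x, dist x (g x) ≤ ε) (x : X) : dist x (k x) ≤ ε := by
  obtain ⟨h, rfl | rfl⟩ := hk
  · simpa [← h.dist_eq (h⁻¹ x)] using hg (h⁻¹ x)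
  · simpa [← h.dist_eq (h⁻¹ x), dist_comm] using hg (g⁻¹ (h⁻¹ x))

theorem dist_list_prod_apply_le {ε : ℝ} (l : List (X ≃ᵢ X))
    (hl : ∀ k ∈ l, ∀ x, dist x (k x) ≤ ε) (x : X) :
    dist x (l.prod x) ≤ l.length * ε := by
  induction l with
  | nil => simp
  | cons k l ih =>
    rw [List.forall_mem_cons] at hl
    calc dist x ((k :: l).prod x)
        ≤ dist x (l.prod x) + dist (l.prod x) (k (l.prod x)) := dist_triangle _ _ _
      _ ≤ l.length * ε + ε := add_le_add (ih hl.2) (hl.1 _)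
      _ = (k :: l).length * ε := by rw [List.length_cons]; push_cast; ring

theorem not_exists_conj_bound_of_small_displacement
    (h : ∀ ε : ℝ, 0 < ε → ∃ g : X ≃ᵢ X, g ≠ 1 ∧ ∀ x : X, dist x (g x) ≤ ε) :
    ¬ ∃ N : ℕ, ∀ g : X ≃ᵢ X, g ≠ 1 → ∀ f : X ≃ᵢ X,
        ∃ l : List (X ≃ᵢ X), l.length ≤ N ∧ (∀ k ∈ l, IsConjOfOrInv g k) ∧
          l.prod = f := by
  rintro ⟨N, hN⟩
  obtain ⟨f, hf, -⟩ := h 1 one_pos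
  obtain ⟨p, hp⟩ : ∃ p, f p ≠ p := by
    by_contra! hfix
    exact hf (IsometryEquiv.ext hfix)
  have hδ : 0 < dist p (f p) := dist_pos.2 hp.symm
  set ε := dist p (f p) / (N + 1)
  have hε : 0 < ε := by positivity
  obtain ⟨g, hg, hgε⟩ := h ε hε
  obtain ⟨l, hlen, hl, hf⟩ := hN g hg f
  have hprod := dist_list_prod_apply_le l (fun k hk => (hl k hk).dist_apply_le hgε) p
  have : (l.length : ℝ) * ε < dist p (f p) :=
    calc (l.length : ℝ) * ε ≤ N * ε := by gcongr
      _ < (N + 1) * ε := by linarith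
      _ = dist p (f p) := mul_div_cancel₀ _ (by positivity)
  rw [hf] at hprod
  linarith

/-- A set `R ⊆ X × X` is read as the graph of a partial map `p.1 ↦ p.2`; it is automatically
single-valued and injective once distances are preserved. -/
def IsPartialIsometry (R : Set (X × X)) : Prop :=
  ∀ p ∈ R, ∀ q ∈ R, dist p.1 q.1 = dist p.2 q.2

namespace IsPartialIsometry

variable {R : Set (X × X)}

theorem image_swap (hR : IsPartialIsometry R) : IsPartialIsometry (Prod.swap '' R) := by
  rintro _ ⟨p, hp, rfl⟩ _ ⟨q, hq, rfl⟩
  exact (hR p hp q hq).symm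

theorem insert (hR : IsPartialIsometry R) {a b : X} (hab : ∀ p ∈ R, dist a p.1 = dist b p.2) :
    IsPartialIsometry (insert (a, b) R) := by
  rintro p (rfl | hp) q (rfl | hq)
  · simp
  · exact hab q hq
  · simpa [dist_comm] using hab p hp
  · exact hR p hp q hq

theorem iUnion {ι : Type*} {R : ι → Set (X × X)} (hdir : Directed (· ⊆ ·) R)
    (hR : ∀ i, IsPartialIsometry (R i)) : IsPartialIsometry (⋃ i, R i) := by
  intro p hp q hq
  obtain ⟨i, hi⟩ := Set.mem_iUnion.1 hp
  obtain ⟨j, hj⟩ := Set.mem_iUnion.1 hq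
  obtain ⟨k, hik, hjk⟩ := hdir i j
  exact hR k p (hik hi) q (hjk hj)

theorem exists_isometry_of_dense [CompleteSpace X] (hR : IsPartialIsometry R)
    (hdom : Dense (Prod.fst '' R)) : ∃ G : X → X, Isometry G ∧ ∀ p ∈ R, G p.1 = p.2 := by
  choose q hqR hq using fun x : Prod.fst '' R => x.2
  obtain ⟨G, hG, hGq⟩ := hdom.exists_isometry_extension (f := fun x => (q x).2)
    (Isometry.of_dist_eq fun x y => by
      rw [← hR _ (hqR x) _ (hqR y), hq, hq, Subtype.dist_eq])
  refine ⟨G, hG, fun p hp => ?_⟩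
  let x : Prod.fst '' R := ⟨p.1, p, hp, rfl⟩
  rw [show p.1 = x from rfl, hGq x]
  exact dist_le_zero.1 (by rw [← hR _ (hqR x) p hp, hq, dist_self])

theorem exists_isometryEquiv_of_dense [CompleteSpace X] (hR : IsPartialIsometry R)
    (hdom : Dense (Prod.fst '' R)) (hran : Dense (Prod.snd '' R)) :
    ∃ g : X ≃ᵢ X, ∀ p ∈ R, g p.1 = p.2 := by
  obtain ⟨G, hG, hGR⟩ := hR.exists_isometry_of_dense hdom
  obtain ⟨H, hH, hHR⟩ := hR.image_swap.exists_isometry_of_dense (by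
    rwa [Set.image_image])
  have hGH : G ∘ H = id := by
    refine Continuous.ext_on hran (hG.continuous.comp hH.continuous) continuous_id ?_
    rintro _ ⟨p, hp, rfl⟩
    exact (congrArg G (hHR p.swap ⟨p, hp, rfl⟩)).trans (hGR p hp)
  exact ⟨IsometryEquiv.mk' G H (congrFun hGH) hG, hGR⟩

end IsPartialIsometry

abbrev katetovExtension (S : Set X) (f : X → ℝ) (hpos : ∀ s ∈ S, 0 < f s)
    (hlip : ∀ s ∈ S, ∀ t ∈ S, |f s - f t| ≤ dist s t)
    (htri : ∀ s ∈ S, ∀ t ∈ S, dist s t ≤ f s + f t) : MetricSpace (Option S) where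
  dist
    | none, none => 0
    | none, some s => f s
    | some s, none => f s
    | some s, some t => dist s.1 t.1
  dist_self := by rintro (_ | s) <;> simp
  dist_comm := by rintro (_ | s) (_ | t) <;> simp [dist_comm]
  dist_triangle := by
    rintro (_ | s) (_ | t) (_ | r) <;> simp only
    · simp
    · simp
    · linarith [hpos t.1 t.2]
    · linarith [(abs_le.1 (hlip t.1 t.2 r.1 r.2)).1]
    · simp
    · exact htri s.1 s.2 r.1 r.2
    · linarith [(abs_le.1 (hlip s.1 s.2 t.1 t.2)).2]
    · exact dist_triangle s.1 t.1 r.1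
  eq_of_dist_eq_zero := by
    rintro (_ | s) (_ | t) h <;> simp only at h
    · rfl
    · exact absurd h (hpos t.1 t.2).ne'
    · exact absurd h (hpos s.1 s.2).ne'
    · exact congrArg some (Subtype.ext (eq_of_dist_eq_zero h))

namespace IsUrysohnOne

theorem nonempty (hX : IsUrysohnOne X) : Nonempty X :=
  let ⟨e, _⟩ := hX.universal PUnit fun _ _ => by simp
  ⟨e PUnit.unit⟩

theorem exists_dist_eq_dist_apply (hX : IsUrysohnOne X) (S : Finset X) (F : X → X)
    (hF : ∀ x ∈ S, ∀ y ∈ S, dist (F x) (F y) = dist x y) (y : X) :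
    ∃ b, ∀ s ∈ S, dist b s = dist y (F s) := by
  obtain ⟨g, hg⟩ := hX.homogeneous S F hF
  exact ⟨g.symm y, fun s hs => by rw [← hg s hs, ← g.dist_eq, g.apply_symm_apply]⟩

theorem exists_dist_eq (hX : IsUrysohnOne X) (S : Finset X) (f : X → ℝ)
    (hf1 : ∀ s ∈ S, f s ≤ 1) (hlip : ∀ s ∈ S, ∀ t ∈ S, |f s - f t| ≤ dist s t)
    (htri : ∀ s ∈ S, ∀ t ∈ S, dist s t ≤ f s + f t) :
    ∃ b, ∀ s ∈ S, dist b s = f s := by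
  classical
  by_cases hzero : ∃ s ∈ S, f s = 0
  · obtain ⟨s, hs, hfs⟩ := hzero
    refine ⟨s, fun t ht => le_antisymm (by simpa [hfs] using htri s hs t ht) ?_⟩
    simpa [hfs, dist_comm] using (le_abs_self _).trans (hlip t ht s hs)
  push Not at hzero
  have hpos : ∀ s ∈ S, 0 < f s := fun s hs =>
    lt_of_le_of_ne (by linarith [htri s hs s hs, dist_self s]) (hzero s hs).symm
  let _ := katetovExtension (S : Set X) f hpos hlip htri
  obtain ⟨e, he⟩ := hX.universal (Option (S : Set X)) <| by
    rintro (_ | s) (_ | t)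
    exacts [zero_le_one, hf1 t.1 t.2, hf1 s.1 s.2, hX.diam_le_one s.1 t.1]
  obtain ⟨b, hb⟩ := hX.exists_dist_eq_dist_apply S
    (fun x => if h : x ∈ S then e (some ⟨x, h⟩) else x)
    (fun x hx y hy => by simp only [dif_pos hx, dif_pos hy, he.dist_eq]; rfl) (e none)
  exact ⟨b, fun s hs => by rw [hb s hs, dif_pos hs, he.dist_eq]; rfl⟩

theorem exists_extend_partialIsometry (hX : IsUrysohnOne X) {ε : ℝ} (hε : 0 ≤ ε)
    {R : Finset (X × X)} (hR : IsPartialIsometry (R : Set (X × X)))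
    (hRε : ∀ p ∈ R, dist p.1 p.2 ≤ ε) (a : X) :
    ∃ b, (∀ p ∈ R, dist a p.1 = dist b p.2) ∧ dist a b ≤ ε := by
  classical
  rcases R.eq_empty_or_nonempty with rfl | hne
  · exact ⟨a, by simp, by simpa using hε⟩
  -- `f` prescribes `d(b, p.2) = d(a, p.1)` and is the least Katětov function doing so; its value
  -- at `a` is at most `max d(p.1, p.2) ≤ ε`.
  let f : X → ℝ := fun y => R.sup' hne fun p => |dist a p.1 - dist p.2 y|
  have le_f : ∀ p ∈ R, ∀ y, |dist a p.1 - dist p.2 y| ≤ f y := fun p hp y =>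
    Finset.le_sup' (fun p => |dist a p.1 - dist p.2 y|) hp
  have f_snd : ∀ p ∈ R, f p.2 = dist a p.1 := fun p hp => by
    refine le_antisymm (Finset.sup'_le _ _ fun q hq => ?_) (by simpa using le_f p hp p.2)
    rw [← hR q hq p hp, dist_comm q.1]
    exact abs_dist_sub_le a p.1 q.1
  have f_le : ∀ y z, f y ≤ f z + dist y z := fun y z => Finset.sup'_le _ _ fun q hq => by
    have := abs_le.1 (le_f q hq z)
    rw [abs_le]
    constructor <;> linarith [dist_triangle q.2 y z, dist_triangle q.2 z y, dist_comm y z]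
  have f_le_one : ∀ y, f y ≤ 1 := fun y => Finset.sup'_le _ _ fun p _ => abs_sub_le_iff.2
    ⟨by linarith [hX.diam_le_one a p.1, dist_nonneg (x := p.2) (y := y)],
      by linarith [hX.diam_le_one p.2 y, dist_nonneg (x := a) (y := p.1)]⟩
  have f_nonneg : ∀ y, 0 ≤ f y := fun y => (abs_nonneg _).trans (le_f _ hne.choose_spec y)
  have dist_le_f : ∀ p ∈ R, ∀ y, dist y p.2 ≤ f y + f p.2 := fun p hp y => by
    rw [f_snd p hp, dist_comm]
    linarith [neg_abs_le (dist a p.1 - dist p.2 y), le_f p hp y]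
  obtain ⟨b, hb⟩ := hX.exists_dist_eq (insert a (R.image Prod.snd)) f (fun y _ => f_le_one y)
    (fun y _ z _ => abs_sub_le_iff.2
      ⟨by linarith [f_le y z], by linarith [f_le z y, dist_comm y z]⟩)
    (by
      simp only [Finset.mem_insert, Finset.mem_image]
      rintro y (rfl | ⟨p, hp, rfl⟩) z (rfl | ⟨q, hq, rfl⟩)
      · rw [dist_self]; exact add_nonneg (f_nonneg _) (f_nonneg _)
      · exact dist_le_f q hq y
      · rw [dist_comm, add_comm]; exact dist_le_f p hp z
      · exact dist_le_f q hq _)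
  refine ⟨b, fun p hp => ?_, ?_⟩
  · rw [hb p.2 (Finset.mem_insert_of_mem (Finset.mem_image_of_mem _ hp)), f_snd p hp]
  · rw [dist_comm, hb a (Finset.mem_insert_self _ _)]
    refine Finset.sup'_le _ _ fun p hp => ?_
    rw [dist_comm a p.1]
    exact (abs_dist_sub_le p.1 p.2 a).trans (hRε p hp)

theorem exists_partialIsometry_forth_back (hX : IsUrysohnOne X) {ε : ℝ} (hε : 0 ≤ ε)
    {R : Finset (X × X)} (hR : IsPartialIsometry (R : Set (X × X)))
    (hRε : ∀ p ∈ R, dist p.1 p.2 ≤ ε) (a : X) :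
    ∃ R' : Finset (X × X), R ⊆ R' ∧ IsPartialIsometry (R' : Set (X × X)) ∧
      (∀ p ∈ R', dist p.1 p.2 ≤ ε) ∧ ∃ b b', (a, b) ∈ R' ∧ (b', a) ∈ R' := by
  classical
  obtain ⟨b, hb, hab⟩ := hX.exists_extend_partialIsometry hε hR hRε a
  set R₁ := insert (a, b) R
  have hR₁ : IsPartialIsometry (R₁ : Set (X × X)) := by
    rw [Finset.coe_insert]; exact hR.insert hb
  have hR₁ε : ∀ p ∈ R₁, dist p.1 p.2 ≤ ε := by
    simpa only [R₁, Finset.forall_mem_insert] using ⟨hab, hRε⟩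
  obtain ⟨b', hb', hab'⟩ := hX.exists_extend_partialIsometry hε (R := R₁.image Prod.swap)
    (by rw [Finset.coe_image]; exact hR₁.image_swap)
    (fun p hp => by
      obtain ⟨q, hq, rfl⟩ := Finset.mem_image.1 hp
      exact (dist_comm _ _).trans_le (hR₁ε q hq)) a
  refine ⟨insert (b', a) R₁, (R.subset_insert _).trans (R₁.subset_insert _), ?_, ?_,
    b, b', by simp [R₁], by simp⟩
  · rw [Finset.coe_insert]
    exact hR₁.insert fun p hp => (hb' p.swap (Finset.mem_image_of_mem _ hp)).symm
  · simpa only [Finset.forall_mem_insert, dist_comm b'] using ⟨hab', hR₁ε⟩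

theorem exists_dense_partialIsometry (hX : IsUrysohnOne X) {ε : ℝ} (hε : 0 ≤ ε)
    (R₀ : Finset (X × X)) (h₀ : IsPartialIsometry (R₀ : Set (X × X)))
    (h₀ε : ∀ p ∈ R₀, dist p.1 p.2 ≤ ε) :
    ∃ R : Set (X × X), ↑R₀ ⊆ R ∧ IsPartialIsometry R ∧
      (∀ p ∈ R, dist p.1 p.2 ≤ ε) ∧ Dense (Prod.fst '' R) ∧ Dense (Prod.snd '' R) := by
  have := hX.separable
  have := hX.nonempty
  obtain ⟨u, hu⟩ := TopologicalSpace.exists_dense_seq X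
  choose! next hsub hnext hnextε hmem using
    fun (R : Finset (X × X)) a (hR : IsPartialIsometry (R : Set (X × X)))
      (hRε : ∀ p ∈ R, dist p.1 p.2 ≤ ε) =>
        hX.exists_partialIsometry_forth_back hε hR hRε a
  obtain ⟨chain, hchain₀, hchain⟩ : ∃ chain : ℕ → Finset (X × X),
      chain 0 = R₀ ∧ ∀ n, chain (n + 1) = next (chain n) (u n) :=
    ⟨fun n => Nat.rec R₀ (fun n R => next R (u n)) n, rfl, fun _ => rfl⟩
  have hgood (n : ℕ) :
      IsPartialIsometry (chain n : Set (X × X)) ∧ ∀ p ∈ chain n, dist p.1 p.2 ≤ ε := by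
    induction n with
    | zero => exact hchain₀ ▸ ⟨h₀, h₀ε⟩
    | succ n ih => exact hchain n ▸ ⟨hnext _ _ ih.1 ih.2, hnextε _ _ ih.1 ih.2⟩
  have hmono : Monotone fun n => (chain n : Set (X × X)) :=
    monotone_nat_of_le_succ fun n =>
      Finset.coe_subset.2 (hchain n ▸ hsub _ _ (hgood n).1 (hgood n).2)
  have hmem_chain : ∀ n, ∃ b b', (u n, b) ∈ chain (n + 1) ∧ (b', u n) ∈ chain (n + 1) :=
    fun n => hchain n ▸ hmem _ _ (hgood n).1 (hgood n).2
  refine ⟨⋃ n, (chain n : Set (X × X)),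
    hchain₀ ▸ Set.subset_iUnion (fun n => (chain n : Set (X × X))) 0,
    IsPartialIsometry.iUnion hmono.directed_le fun n => (hgood n).1, ?_, hu.mono ?_, hu.mono ?_⟩
  · simp only [Set.mem_iUnion, Finset.mem_coe, forall_exists_index]
    exact fun p n hp => (hgood n).2 p hp
  · rintro _ ⟨n, rfl⟩
    obtain ⟨b, -, hb, -⟩ := hmem_chain n
    exact ⟨_, Set.mem_iUnion.2 ⟨n + 1, hb⟩, rfl⟩
  · rintro _ ⟨n, rfl⟩
    obtain ⟨-, b', -, hb'⟩ := hmem_chain n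
    exact ⟨_, Set.mem_iUnion.2 ⟨n + 1, hb'⟩, rfl⟩

theorem exists_ne_one_dist_le (hX : IsUrysohnOne X) {ε : ℝ} (hε : 0 < ε) :
    ∃ g : X ≃ᵢ X, g ≠ 1 ∧ ∀ x : X, dist x (g x) ≤ ε := by
  have := hX.complete
  obtain ⟨p⟩ := hX.nonempty
  have hδ : 0 < min ε 1 := lt_min hε one_pos
  obtain ⟨q, hq⟩ := hX.exists_dist_eq {p} (fun _ => min ε 1) (by simp) (by simp)
    (by simp [hδ.le])
  have hqp : dist q p = min ε 1 := hq p (Finset.mem_singleton_self p)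
  obtain ⟨R, hR₀, hR, hRε, hdom, hran⟩ := hX.exists_dense_partialIsometry hε.le {(p, q)}
    (by rw [Finset.coe_singleton]; rintro _ rfl _ rfl; simp)
    (by simp [dist_comm p, hqp])
  obtain ⟨g, hg⟩ := hR.exists_isometryEquiv_of_dense hdom hran
  have hgp : g p = q := hg (p, q) (hR₀ (by simp))
  refine ⟨g, fun h => ?_, fun x => ?_⟩
  · rw [h, IsometryEquiv.coe_one, id] at hgp
    simp [← hgp, hδ.ne] at hqp
  · have hclosed : IsClosed {x | dist x (g x) ≤ ε} :=
      isClosed_le (by fun_prop) continuous_const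
    refine hclosed.closure_subset_iff.2 ?_ (hdom.closure_eq.symm ▸ Set.mem_univ x)
    rintro _ ⟨p, hp, rfl⟩
    simpa [hg p hp] using hRε p hp

end IsUrysohnOne

theorem small_displacement_and_not_boundedly_simple (X : Type) [MetricSpace X]
    (hX : IsUrysohnOne X) :
    (∀ ε : ℝ, 0 < ε → ∃ g : X ≃ᵢ X, g ≠ 1 ∧ ∀ x : X, dist x (g x) ≤ ε) ∧
    ¬ ∃ N : ℕ, ∀ g : X ≃ᵢ X, g ≠ 1 → ∀ f : X ≃ᵢ X,
        ∃ l : List (X ≃ᵢ X), l.length ≤ N ∧ (∀ k ∈ l, IsConjOfOrInv g k) ∧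
          l.prod = f :=
  ⟨fun _ hε => hX.exists_ne_one_dist_le hε,
    not_exists_conj_bound_of_small_displacement fun _ hε => hX.exists_ne_one_dist_le hε⟩
end
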